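/- arXiv:math/0503301 — 2 statements merged into one kernel-verified Lean document; each statement's English description precedes it below -/
import Mathlib

section
/- The finite ordinals as objects, with Brauerian split equivalences R : m ⊢ n as arrows, composition ∗, and the identity on n being the split equivalence whose classes are {m_s, m_t} for m < n, form a category Br: composition ∗ is associative and the identities are neutral for ∗. -/
/-!
`P ∗ R` is the transitive closure of `R ∪ P` on `m ⊕ n ⊕ k`, restricted to `m ⊕ k`. Both
`Q ∗ (P ∗ R)` and `(Q ∗ P) ∗ R` are the restriction to `m ⊕ l` of the closure of `R ∪ P ∪ Q` on
`m ⊕ n ⊕ k ⊕ l`: a path between visible points splits at the visible points it passes through,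
and the stretches in between run through one hidden ordinal only, so they are exactly the paths
computed by the inner composite. For the identities, collapsing the two copies of the middle
ordinal sends every step into `R`, which is reflexive and transitive, and each `R`-edge is
recovered by a path of at most three steps.
-/

/-- A relation is *Brauerian* when every equivalence class of the corresponding
partition has exactly two elements. -/
def IsBrauerian {α : Type*} (R : α → α → Prop) : Prop :=
  ∀ a, ∃ b, b ≠ a ∧ R a b ∧ ∀ c, R a c → c = a ∨ c = b

/-- The composition `P ∗ R` of split relations `R : X ⊢ Y` and `P : Y ⊢ Z`,
defined as `Tr(R^{-t} ∪ P^{-s}) ∩ (X^s ∪ Z^t)²`. -/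
def splitComp {α β γ : Type*} (Pr : β ⊕ γ → β ⊕ γ → Prop)
    (R : α ⊕ β → α ⊕ β → Prop) : α ⊕ γ → α ⊕ γ → Prop := fun u v =>
  Relation.TransGen
    (fun x y : α ⊕ β ⊕ γ =>
      (∃ x' y', Sum.map id Sum.inl x' = x ∧ Sum.map id Sum.inl y' = y ∧ R x' y') ∨
      (∃ x' y', Sum.inr x' = x ∧ Sum.inr y' = y ∧ Pr x' y'))
    (Sum.map id Sum.inr u) (Sum.map id Sum.inr v)

/-- A Brauerian split equivalence `m ⊢ n` of finite ordinals. -/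
def IsBrSplitEquiv {m n : ℕ} (R : Fin m ⊕ Fin n → Fin m ⊕ Fin n → Prop) : Prop :=
  Equivalence R ∧ IsBrauerian R

/-- The identity arrow of `Br` on `n`: its partition classes are `{m_s, m_t}` for `m < n`. -/
def brId (n : ℕ) : Fin n ⊕ Fin n → Fin n ⊕ Fin n → Prop :=
  fun u v => Sum.elim id id u = Sum.elim id id v

open Relation Function

namespace Relation

variable {E F G C : Type*}

lemma map_sup (r s : F → F → Prop) (f : F → E) :
    Relation.Map (r ⊔ s) f f = Relation.Map r f f ⊔ Relation.Map s f f := by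
  ext x y
  simp only [Relation.Map, Pi.sup_apply, sup_Prop_eq]
  grind

lemma transGen_map_of_injective {r : F → F → Prop} {k : F → E} (hk : Injective k) :
    TransGen (Relation.Map r k k) = Relation.Map (TransGen r) k k := by
  ext x y
  constructor
  · intro h
    induction h with
    | single h => exact map_mono (fun _ _ => TransGen.single) _ _ h
    | tail _ hyz ih =>
      obtain ⟨a, b, hab, rfl, rfl⟩ := ih
      obtain ⟨b', c, hbc, hb, rfl⟩ := hyz
      exact ⟨a, c, hab.tail (hk hb ▸ hbc), rfl, rfl⟩
  · rintro ⟨a, b, hab, rfl, rfl⟩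
    exact TransGen.lift k (le_onFun_map k) a b hab

lemma map_onFun_of_pullback {r : F → F → Prop} {k : F → E} {j : G → E} {f : C → F} {g : C → G}
    (hcomm : ∀ c, k (f c) = j (g c)) (hpb : ∀ a x, k a = j x → ∃ c, f c = a ∧ g c = x) :
    (Relation.Map r k k on j) = Relation.Map (r on f) g g := by
  ext x y
  constructor
  · rintro ⟨a, b, hab, ha, hb⟩
    obtain ⟨c, rfl, rfl⟩ := hpb a x ha
    obtain ⟨d, rfl, rfl⟩ := hpb b y hb
    exact ⟨c, d, hab, rfl, rfl⟩
  · rintro ⟨c, d, hcd, rfl, rfl⟩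
    exact ⟨f c, f d, hcd, hcomm c, hcomm d⟩

-- Strengthened for the induction: a path from a hidden point first reaches `G` by `r`-steps.
lemma transGen_sup_map_cases {r : E → E → Prop} {s : G → G → Prop} {j : G → E}
    (hj : Injective j) {z : E} {y : G} (h : TransGen (r ⊔ Relation.Map s j j) z (j y)) :
    (∃ w, TransGen r z (j w) ∧ ReflTransGen ((TransGen r on j) ⊔ s) w y) ∨
      ∃ x, j x = z ∧ TransGen ((TransGen r on j) ⊔ s) x y := by
  induction h using TransGen.head_induction_on with
  | single hz =>
    rcases hz with hz | ⟨x, y', hxy, rfl, hy⟩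
    · exact Or.inl ⟨y, .single hz, .refl⟩
    · exact Or.inr ⟨x, rfl, .single (Or.inr (hj hy ▸ hxy))⟩
  | head hz _ ih =>
    rcases hz with hz | ⟨x, x', hxx', rfl, rfl⟩
    · rcases ih with ⟨w, hw, hwy⟩ | ⟨x, rfl, hxy⟩
      · exact Or.inl ⟨w, hw.head hz, hwy⟩
      · exact Or.inl ⟨x, .single hz, hxy.to_reflTransGen⟩
    · refine Or.inr ⟨x, rfl, ?_⟩
      rcases ih with ⟨w, hw, hwy⟩ | ⟨x'', hx'', hxy⟩
      · exact TransGen.trans_left (.tail (.single (Or.inr hxx')) (Or.inl hw)) hwy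
      · exact (hj hx'' ▸ hxy).head (Or.inr hxx')

lemma onFun_transGen_sup_map {r : E → E → Prop} {s : G → G → Prop} {j : G → E}
    (hj : Injective j) :
    (TransGen (r ⊔ Relation.Map s j j) on j) = TransGen ((TransGen r on j) ⊔ s) := by
  ext x y
  constructor
  · intro h
    rcases transGen_sup_map_cases hj h with ⟨w, hw, hwy⟩ | ⟨x', hx', hxy⟩
    · exact TransGen.trans_left (.single (Or.inl hw)) hwy
    · exact hj hx' ▸ hxy
  · refine fun h => TransGen.lift' j ?_ x y h
    rintro a b (hab | hab)
    · exact TransGen.mono le_sup_left _ _ hab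
    · exact .single (Or.inr ⟨a, b, hab, rfl, rfl⟩)

lemma transGen_sup_map_onFun_of_pullback {r : F → F → Prop} {s : G → G → Prop} {k : F → E}
    {j : G → E} {f : C → F} {g : C → G} (hk : Injective k) (hj : Injective j)
    (hcomm : ∀ c, k (f c) = j (g c)) (hpb : ∀ a x, k a = j x → ∃ c, f c = a ∧ g c = x) :
    TransGen (Relation.Map (TransGen r on f) g g ⊔ s) =
      (TransGen (Relation.Map r k k ⊔ Relation.Map s j j) on j) := by
  rw [onFun_transGen_sup_map hj, transGen_map_of_injective hk, map_onFun_of_pullback hcomm hpb]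

lemma onFun_transGen_eq_of_retraction {r : E → E → Prop} {s : F → F → Prop} [IsTrans F s]
    {f : E → F} {ι : F → E} (hfι : ∀ x, f (ι x) = x) (hr : r ≤ (s on f))
    (hs : s ≤ (TransGen r on ι)) : (TransGen r on ι) = s := by
  refine le_antisymm (fun x y h => ?_) hs
  simpa only [transGen_eq_self, onFun, hfι] using TransGen.lift f hr _ _ h

end Relation

section Assoc

variable {α β γ δ : Type*}

/-- `R^{-t} ∪ P^{-s}` on `α ⊕ β ⊕ γ`. -/
def splitStep (Pr : β ⊕ γ → β ⊕ γ → Prop) (R : α ⊕ β → α ⊕ β → Prop) :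
    α ⊕ β ⊕ γ → α ⊕ β ⊕ γ → Prop :=
  Relation.Map R (Sum.map id Sum.inl) (Sum.map id Sum.inl) ⊔ Relation.Map Pr Sum.inr Sum.inr

lemma splitComp_eq_onFun (Pr : β ⊕ γ → β ⊕ γ → Prop) (R : α ⊕ β → α ⊕ β → Prop) :
    splitComp Pr R = (TransGen (splitStep Pr R) on Sum.map id Sum.inr) := by
  unfold splitComp onFun splitStep Relation.Map
  congr! 6 with x y
  simp only [Pi.sup_apply, sup_Prop_eq]
  grind

def splitStep₃ (R : α ⊕ β → α ⊕ β → Prop) (Pr : β ⊕ γ → β ⊕ γ → Prop)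
    (Q : γ ⊕ δ → γ ⊕ δ → Prop) : α ⊕ β ⊕ γ ⊕ δ → α ⊕ β ⊕ γ ⊕ δ → Prop :=
  Relation.Map R (Sum.map id Sum.inl) (Sum.map id Sum.inl) ⊔
    Relation.Map Pr (Sum.inr ∘ Sum.map id Sum.inl) (Sum.inr ∘ Sum.map id Sum.inl) ⊔
    Relation.Map Q (Sum.inr ∘ Sum.inr) (Sum.inr ∘ Sum.inr)

variable (R : α ⊕ β → α ⊕ β → Prop) (Pr : β ⊕ γ → β ⊕ γ → Prop) (Q : γ ⊕ δ → γ ⊕ δ → Prop)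

lemma splitComp_splitComp_left_eq_onFun :
    splitComp Q (splitComp Pr R) =
      (TransGen (splitStep₃ R Pr Q) on Sum.map id (Sum.inr ∘ Sum.inr)) := by
  rw [splitComp_eq_onFun, splitComp_eq_onFun, splitStep,
    transGen_sup_map_onFun_of_pullback (k := Sum.map id (Sum.map id Sum.inl))
      (j := Sum.map id (Sum.inr : γ ⊕ δ → β ⊕ γ ⊕ δ))]
  · change (TransGen _ on (Sum.map id Sum.inr ∘ Sum.map id Sum.inr)) = _
    rw [Sum.map_comp_map]
    congr 2
    simp only [splitStep, splitStep₃, Relation.map_sup, Relation.map_map, Sum.map_comp_map]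
    rfl
  · exact injective_id.sumMap (injective_id.sumMap Sum.inl_injective)
  · exact injective_id.sumMap Sum.inr_injective
  · rintro (a | c) <;> rfl
  · rintro (a | b | c) (a' | c' | d') h <;>
      simp only [Sum.map_inl, Sum.map_inr, id_eq, Sum.inl.injEq, Sum.inr.injEq, reduceCtorEq] at h
    all_goals subst h; first | exact ⟨Sum.inl _, rfl, rfl⟩ | exact ⟨Sum.inr _, rfl, rfl⟩

lemma splitComp_splitComp_right_eq_onFun :
    splitComp (splitComp Q Pr) R =
      (TransGen (splitStep₃ R Pr Q) on Sum.map id (Sum.inr ∘ Sum.inr)) := by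
  rw [splitComp_eq_onFun, splitComp_eq_onFun, splitStep, sup_comm,
    transGen_sup_map_onFun_of_pullback (k := (Sum.inr : β ⊕ γ ⊕ δ → α ⊕ β ⊕ γ ⊕ δ))
      (j := Sum.map id (Sum.map id (Sum.inr : δ → γ ⊕ δ)))]
  · change (TransGen _ on (Sum.map id (Sum.map id Sum.inr) ∘ Sum.map id Sum.inr)) = _
    rw [Sum.map_comp_map]
    congr 2
    simp only [splitStep, splitStep₃, Relation.map_sup, Relation.map_map, Sum.map_comp_map]
    rw [sup_comm, ← sup_assoc]
    rfl
  · exact Sum.inr_injective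
  · exact injective_id.sumMap (injective_id.sumMap Sum.inr_injective)
  · rintro (b | d) <;> rfl
  · rintro (b | c | d) (a' | b' | d') h <;>
      simp only [Sum.map_inl, Sum.map_inr, id_eq, Sum.inl.injEq, Sum.inr.injEq, reduceCtorEq] at h
    all_goals subst h; first | exact ⟨Sum.inl _, rfl, rfl⟩ | exact ⟨Sum.inr _, rfl, rfl⟩

theorem splitComp_assoc : splitComp Q (splitComp Pr R) = splitComp (splitComp Q Pr) R := by
  rw [splitComp_splitComp_left_eq_onFun, splitComp_splitComp_right_eq_onFun]

end Assoc

section Identity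

variable {α β : Type*} (R : α ⊕ β → α ⊕ β → Prop) [Std.Refl R] [IsTrans (α ⊕ β) R]

lemma splitComp_diag_right : splitComp R ((· = ·) on Sum.elim id id) = R := by
  rw [splitComp_eq_onFun]
  have hop : ∀ u : α ⊕ β,
      ReflTransGen (splitStep R ((· = ·) on Sum.elim id id))
        (Sum.map id Sum.inr u) (Sum.inr u) ∧
      ReflTransGen (splitStep R ((· = ·) on Sum.elim id id))
        (Sum.inr u) (Sum.map id Sum.inr u) := by
    rintro (a | b)
    · exact ⟨.single (Or.inl ⟨Sum.inl a, Sum.inr a, rfl, rfl, rfl⟩),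
        .single (Or.inl ⟨Sum.inr a, Sum.inl a, rfl, rfl, rfl⟩)⟩
    · exact ⟨.refl, .refl⟩
  have hcollapse : ∀ x : α ⊕ α,
      Sum.elim Sum.inl id (Sum.map id Sum.inl x) = (Sum.inl (Sum.elim id id x) : α ⊕ β) := by
    rintro (a | a) <;> rfl
  refine onFun_transGen_eq_of_retraction (f := Sum.elim Sum.inl id)
    (by rintro (a | b) <;> rfl) ?_ fun u v huv => ?_
  · rintro _ _ (⟨x, y, hxy, rfl, rfl⟩ | ⟨u, v, huv, rfl, rfl⟩)
    · simp only [onFun, hcollapse, hxy]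
      exact refl _
    · exact huv
  · exact (TransGen.trans_right (hop u).1 (.single (Or.inr ⟨u, v, huv, rfl, rfl⟩))).trans_left
      (hop v).2

lemma splitComp_diag_left : splitComp ((· = ·) on Sum.elim id id) R = R := by
  rw [splitComp_eq_onFun]
  have hop : ∀ u : α ⊕ β,
      ReflTransGen (splitStep ((· = ·) on Sum.elim id id) R)
        (Sum.map id Sum.inr u) (Sum.map id Sum.inl u) ∧
      ReflTransGen (splitStep ((· = ·) on Sum.elim id id) R)
        (Sum.map id Sum.inl u) (Sum.map id Sum.inr u) := by
    rintro (a | b)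
    · exact ⟨.refl, .refl⟩
    · exact ⟨.single (Or.inr ⟨Sum.inr b, Sum.inl b, rfl, rfl, rfl⟩),
        .single (Or.inr ⟨Sum.inl b, Sum.inr b, rfl, rfl, rfl⟩)⟩
  have hcollapse : ∀ x : β ⊕ β,
      Sum.map id (Sum.elim id id) (Sum.inr x : α ⊕ β ⊕ β) = Sum.inr (Sum.elim id id x) := by
    rintro (b | b) <;> rfl
  have hretract : ∀ u : α ⊕ β, Sum.map id (Sum.elim id id) (Sum.map id Sum.inl u) = u := by
    rintro (a | b) <;> rfl
  refine onFun_transGen_eq_of_retraction (f := Sum.map id (Sum.elim id id))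
    (by rintro (a | b) <;> rfl) ?_ fun u v huv => ?_
  · rintro _ _ (⟨u, v, huv, rfl, rfl⟩ | ⟨x, y, hxy, rfl, rfl⟩)
    · simpa only [onFun, hretract] using huv
    · simp only [onFun, hcollapse, hxy]
      exact refl _
  · exact (TransGen.trans_right (hop u).1 (.single (Or.inl ⟨u, v, huv, rfl, rfl⟩))).trans_left
      (hop v).2

end Identity

lemma isBrauerian_diag {α : Type*} :
    IsBrauerian ((· = ·) on Sum.elim id id : α ⊕ α → α ⊕ α → Prop) := by
  rintro (a | a)
  · refine ⟨Sum.inr a, Sum.inr_ne_inl, rfl, ?_⟩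
    rintro (c | c) (rfl : a = c) <;> simp
  · refine ⟨Sum.inl a, Sum.inl_ne_inr, rfl, ?_⟩
    rintro (c | c) (rfl : a = c) <;> simp

/-- The finite ordinals as objects, with Brauerian split equivalences `R : m ⊢ n`
as arrows, composition `∗`, and the identity on `n` given by the split equivalence
whose classes are `{m_s, m_t}` for `m < n`, form a category `Br`: the identities
are Brauerian split equivalences, composition `∗` is associative, and the
identities are neutral for `∗`. -/
theorem br_is_category :
    (∀ n : ℕ, IsBrSplitEquiv (brId n)) ∧
    (∀ (m n k l : ℕ)
      (R : Fin m ⊕ Fin n → Fin m ⊕ Fin n → Prop)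
      (Pr : Fin n ⊕ Fin k → Fin n ⊕ Fin k → Prop)
      (Q : Fin k ⊕ Fin l → Fin k ⊕ Fin l → Prop),
      IsBrSplitEquiv R → IsBrSplitEquiv Pr → IsBrSplitEquiv Q →
      splitComp Q (splitComp Pr R) = splitComp (splitComp Q Pr) R) ∧
    (∀ (m n : ℕ) (R : Fin m ⊕ Fin n → Fin m ⊕ Fin n → Prop),
      IsBrSplitEquiv R →
      splitComp R (brId m) = R ∧ splitComp (brId n) R = R) := by
  refine ⟨fun n => ⟨eq_equivalence.comap _, isBrauerian_diag⟩,
    fun m n k l R Pr Q _ _ _ => splitComp_assoc R Pr Q, fun m n R hR => ?_⟩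
  have := hR.1.stdRefl
  have := hR.1.isTrans
  exact ⟨splitComp_diag_right R, splitComp_diag_left R⟩
end

section
/- Development Lemma: for every arrow term f of PN¬ there is a developed arrow term f′ of the same type such that f = f′ holds in PN¬. -/
/-! ### The language L¬,∧,∨ generated from the set `P` of letters -/

inductive Form (P : Type) : Type
  | letter : P → Form P
  | neg : Form P → Form P
  | conj : Form P → Form P → Form P
  | disj : Form P → Form P → Form P

infixr:70 " ⋏ " => Form.conj
infixr:66 " ⋎ " => Form.disj
prefix:77 "∼" => Form.neg

/-- The number of occurrences of letters in a formula (the object map of `G`). -/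
def Form.size {P : Type} : Form P → ℕ
  | .letter _ => 1
  | .neg A => A.size
  | .conj A B => A.size + B.size
  | .disj A B => A.size + B.size
/-! ### Arrow terms of the free proof-net category PN¬ -/

inductive Term (P : Type) : Form P → Form P → Type
  | id (A : Form P) : Term P A A
  | comp {A B C : Form P} : Term P B C → Term P A B → Term P A C
  | conj {A B D E : Form P} : Term P A D → Term P B E → Term P (A ⋏ B) (D ⋏ E)
  | disj {A B D E : Form P} : Term P A D → Term P B E → Term P (A ⋎ B) (D ⋎ E)
  | bConjTo (A B C : Form P) : Term P (A ⋏ (B ⋏ C)) ((A ⋏ B) ⋏ C)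
  | bConjFrom (A B C : Form P) : Term P ((A ⋏ B) ⋏ C) (A ⋏ (B ⋏ C))
  | bDisjTo (A B C : Form P) : Term P (A ⋎ (B ⋎ C)) ((A ⋎ B) ⋎ C)
  | bDisjFrom (A B C : Form P) : Term P ((A ⋎ B) ⋎ C) (A ⋎ (B ⋎ C))
  | cConj (A B : Form P) : Term P (A ⋏ B) (B ⋏ A)
  | cDisj (A B : Form P) : Term P (B ⋎ A) (A ⋎ B)
  | d (A B C : Form P) : Term P (A ⋏ (B ⋎ C)) ((A ⋏ B) ⋎ C)
  | delta (B A : Form P) : Term P A (A ⋏ (∼B ⋎ B))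
  | sigma (B A : Form P) : Term P ((B ⋏ ∼B) ⋎ A) A

infixr:80 " ⬝ " => Term.comp
infixr:70 " ⊼ " => Term.conj
infixr:66 " ⊽ " => Term.disj

/-- The arrow `d^R_{C,B,A} : (C∨B)∧A ⊢ C∨(B∧A)`. -/
def dR {P : Type} (C B A : Form P) : Term P ((C ⋎ B) ⋏ A) (C ⋎ (B ⋏ A)) :=
  Term.cDisj C (B ⋏ A) ⬝ ((Term.cConj A B ⊽ Term.id C) ⬝
    (Term.d A B C ⬝ ((Term.id A ⊼ Term.cDisj B C) ⬝ Term.cConj (C ⋎ B) A)))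

/-- `Σ̂∧_{B,A} = ĉ∧ ∘ Δ̂∧_{B,A} : A ⊢ (¬B∨B)∧A`. -/
def sigmaConj {P : Type} (B A : Form P) : Term P A ((∼B ⋎ B) ⋏ A) :=
  Term.cConj A (∼B ⋎ B) ⬝ Term.delta B A

/-- `Δ̂∨_{B,A} = Σ̂∨_{B,A} ∘ ĉ∨ : A∨(B∧¬B) ⊢ A`. -/
def deltaDisj {P : Type} (B A : Form P) : Term P (A ⋎ (B ⋏ ∼B)) A :=
  Term.sigma B A ⬝ Term.cDisj (B ⋏ ∼B) A

/-- `Δ̂∧′_{B,A} = (1_A ∧ ĉ∨) ∘ Δ̂∧_{B,A} : A ⊢ A∧(B∨¬B)`. -/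
def delta' {P : Type} (B A : Form P) : Term P A (A ⋏ (B ⋎ ∼B)) :=
  (Term.id A ⊼ Term.cDisj B (∼B)) ⬝ Term.delta B A

/-- `Σ̂∨′_{B,A} = Σ̂∨_{B,A} ∘ (ĉ∧ ∨ 1_A) : (¬B∧B)∨A ⊢ A`. -/
def sigma' {P : Type} (B A : Form P) : Term P ((∼B ⋏ B) ⋎ A) A :=
  Term.sigma B A ⬝ (Term.cConj (∼B) B ⊽ Term.id A)
/-! ### The equations of DS, imposed on arrow terms -/

inductive Eqv {P : Type} : ∀ {A B : Form P}, Term P A B → Term P A B → Prop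
  -- equivalence and congruence
  | refl {A B : Form P} (f : Term P A B) : Eqv f f
  | symm {A B : Form P} {f g : Term P A B} : Eqv f g → Eqv g f
  | trans {A B : Form P} {f g h : Term P A B} : Eqv f g → Eqv g h → Eqv f h
  | congComp {A B C : Form P} {g g' : Term P B C} {f f' : Term P A B} :
      Eqv g g' → Eqv f f' → Eqv (g ⬝ f) (g' ⬝ f')
  | congConj {A B D E : Form P} {f f' : Term P A D} {g g' : Term P B E} :
      Eqv f f' → Eqv g g' → Eqv (f ⊼ g) (f' ⊼ g')
  | congDisj {A B D E : Form P} {f f' : Term P A D} {g g' : Term P B E} :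
      Eqv f f' → Eqv g g' → Eqv (f ⊽ g) (f' ⊽ g')
  -- (cat 1), (cat 2)
  | catIdR {A B : Form P} (f : Term P A B) : Eqv (f ⬝ Term.id A) f
  | catIdL {A B : Form P} (f : Term P A B) : Eqv (Term.id B ⬝ f) f
  | catAssoc {A B C D : Form P} (f : Term P A B) (g : Term P B C) (h : Term P C D) :
      Eqv (h ⬝ (g ⬝ f)) ((h ⬝ g) ⬝ f)
  -- bifunctorial equations (ξ 1), (ξ 2)
  | conjOne (A B : Form P) : Eqv (Term.id A ⊼ Term.id B) (Term.id (A ⋏ B))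
  | disjOne (A B : Form P) : Eqv (Term.id A ⊽ Term.id B) (Term.id (A ⋎ B))
  | conjTwo {A₁ B₁ C₁ A₂ B₂ C₂ : Form P} (g₁ : Term P B₁ C₁) (f₁ : Term P A₁ B₁)
      (g₂ : Term P B₂ C₂) (f₂ : Term P A₂ B₂) :
      Eqv ((g₁ ⬝ f₁) ⊼ (g₂ ⬝ f₂)) ((g₁ ⊼ g₂) ⬝ (f₁ ⊼ f₂))
  | disjTwo {A₁ B₁ C₁ A₂ B₂ C₂ : Form P} (g₁ : Term P B₁ C₁) (f₁ : Term P A₁ B₁)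
      (g₂ : Term P B₂ C₂) (f₂ : Term P A₂ B₂) :
      Eqv ((g₁ ⬝ f₁) ⊽ (g₂ ⬝ f₂)) ((g₁ ⊽ g₂) ⬝ (f₁ ⊽ f₂))
  -- naturality equations
  | bConjNat {A B C D E F : Form P} (f : Term P A D) (g : Term P B E) (h : Term P C F) :
      Eqv (((f ⊼ g) ⊼ h) ⬝ Term.bConjTo A B C) (Term.bConjTo D E F ⬝ (f ⊼ (g ⊼ h)))
  | bDisjNat {A B C D E F : Form P} (f : Term P A D) (g : Term P B E) (h : Term P C F) :
      Eqv (((f ⊽ g) ⊽ h) ⬝ Term.bDisjTo A B C) (Term.bDisjTo D E F ⬝ (f ⊽ (g ⊽ h)))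
  | cConjNat {A B D E : Form P} (f : Term P A D) (g : Term P B E) :
      Eqv ((g ⊼ f) ⬝ Term.cConj A B) (Term.cConj D E ⬝ (f ⊼ g))
  | cDisjNat {A B D E : Form P} (f : Term P A D) (g : Term P B E) :
      Eqv ((g ⊽ f) ⬝ Term.cDisj B A) (Term.cDisj E D ⬝ (f ⊽ g))
  | dNat {A B C D E F : Form P} (f : Term P A D) (g : Term P B E) (h : Term P C F) :
      Eqv (((f ⊼ g) ⊽ h) ⬝ Term.d A B C) (Term.d D E F ⬝ (f ⊼ (g ⊽ h)))
  -- (b̂ξ b̂ξ)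
  | bConjIso₁ (A B C : Form P) :
      Eqv (Term.bConjFrom A B C ⬝ Term.bConjTo A B C) (Term.id (A ⋏ (B ⋏ C)))
  | bConjIso₂ (A B C : Form P) :
      Eqv (Term.bConjTo A B C ⬝ Term.bConjFrom A B C) (Term.id ((A ⋏ B) ⋏ C))
  | bDisjIso₁ (A B C : Form P) :
      Eqv (Term.bDisjFrom A B C ⬝ Term.bDisjTo A B C) (Term.id (A ⋎ (B ⋎ C)))
  | bDisjIso₂ (A B C : Form P) :
      Eqv (Term.bDisjTo A B C ⬝ Term.bDisjFrom A B C) (Term.id ((A ⋎ B) ⋎ C))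
  -- (b̂ξ 5)
  | bConjPent (A B C D : Form P) :
      Eqv (Term.bConjFrom A B (C ⋏ D) ⬝ Term.bConjFrom (A ⋏ B) C D)
        ((Term.id A ⊼ Term.bConjFrom B C D) ⬝
          (Term.bConjFrom A (B ⋏ C) D ⬝ (Term.bConjFrom A B C ⊼ Term.id D)))
  | bDisjPent (A B C D : Form P) :
      Eqv (Term.bDisjFrom A B (C ⋎ D) ⬝ Term.bDisjFrom (A ⋎ B) C D)
        ((Term.id A ⊽ Term.bDisjFrom B C D) ⬝
          (Term.bDisjFrom A (B ⋎ C) D ⬝ (Term.bDisjFrom A B C ⊽ Term.id D)))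
  -- (ĉ∧ ĉ∧), (ĉ∨ ĉ∨)
  | cConjIso (A B : Form P) : Eqv (Term.cConj B A ⬝ Term.cConj A B) (Term.id (A ⋏ B))
  | cDisjIso (A B : Form P) : Eqv (Term.cDisj A B ⬝ Term.cDisj B A) (Term.id (A ⋎ B))
  -- (b̂∧ ĉ∧), (b̂∨ ĉ∨)
  | bcConj (A B C : Form P) :
      Eqv ((Term.id B ⊼ Term.cConj C A) ⬝ (Term.bConjFrom B C A ⬝
            (Term.cConj A (B ⋏ C) ⬝ (Term.bConjFrom A B C ⬝ (Term.cConj B A ⊼ Term.id C)))))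
        (Term.bConjFrom B A C)
  | bcDisj (A B C : Form P) :
      Eqv ((Term.id B ⊽ Term.cDisj A C) ⬝ (Term.bDisjFrom B C A ⬝
            (Term.cDisj (B ⋎ C) A ⬝ (Term.bDisjFrom A B C ⬝ (Term.cDisj A B ⊽ Term.id C)))))
        (Term.bDisjFrom B A C)
  -- (d ∧), (d ∨)
  | dConj (A B C D : Form P) :
      Eqv ((Term.bConjFrom A B C ⊽ Term.id D) ⬝ Term.d (A ⋏ B) C D)
        (Term.d A (B ⋏ C) D ⬝ ((Term.id A ⊼ Term.d B C D) ⬝ Term.bConjFrom A B (C ⋎ D)))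
  | dDisj (D C B A : Form P) :
      Eqv (Term.d D C (B ⋎ A) ⬝ (Term.id D ⊼ Term.bDisjFrom C B A))
        (Term.bDisjFrom (D ⋏ C) B A ⬝ ((Term.d D C B ⊽ Term.id A) ⬝ Term.d D (C ⋎ B) A))
  -- (d b̂∧), (d b̂∨)
  | dBConj (A B C D : Form P) :
      Eqv (dR (A ⋏ B) C D ⬝ (Term.d A B C ⊼ Term.id D))
        (Term.d A B (C ⋏ D) ⬝ ((Term.id A ⊼ dR B C D) ⬝ Term.bConjFrom A (B ⋎ C) D))
  | dBDisj (D C B A : Form P) :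
      Eqv ((Term.id D ⊽ Term.d C B A) ⬝ dR D C (B ⋎ A))
        (Term.bDisjFrom D (C ⋏ B) A ⬝ ((dR D C B ⊽ Term.id A) ⬝ Term.d (D ⋎ C) B A))
  -- (Δ̂∧ nat)
  | deltaNat {A D : Form P} (B : Form P) (f : Term P A D) :
      Eqv ((f ⊼ Term.id (∼B ⋎ B)) ⬝ Term.delta B A) (Term.delta B D ⬝ f)
  -- (Σ̂∨ nat)
  | sigmaNat {A D : Form P} (B : Form P) (f : Term P A D) :
      Eqv (f ⬝ Term.sigma B A) (Term.sigma B D ⬝ (Term.id (B ⋏ ∼B) ⊽ f))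
  -- (b̂∧ Δ̂∧)
  | bDelta (A B C : Form P) :
      Eqv (Term.bConjFrom A B (∼C ⋎ C) ⬝ Term.delta C (A ⋏ B)) (Term.id A ⊼ Term.delta C B)
  -- (b̂∨ Σ̂∨)
  | bSigma (C B A : Form P) :
      Eqv (Term.sigma C (B ⋎ A) ⬝ Term.bDisjFrom (C ⋏ ∼C) B A) (Term.sigma C B ⊽ Term.id A)
  -- (d Σ̂∧)
  | dSigmaConj (A B C : Form P) :
      Eqv (Term.d (∼A ⋎ A) B C ⬝ sigmaConj A (B ⋎ C)) (sigmaConj A B ⊽ Term.id C)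
  -- (d Δ̂∨)
  | dDeltaDisj (A C B : Form P) :
      Eqv (deltaDisj A (C ⋏ B) ⬝ Term.d C B (A ⋏ ∼A)) (Term.id C ⊼ deltaDisj A B)
  -- (Σ̂∨ Δ̂∧)
  | sigmaDelta (A : Form P) :
      Eqv (Term.sigma A A ⬝ (Term.d A (∼A) A ⬝ Term.delta A A)) (Term.id A)
  -- (Σ̂∨′ Δ̂∧′)
  | sigmaDelta' (A : Form P) :
      Eqv (sigma' A (∼A) ⬝ (Term.d (∼A) A (∼A) ⬝ delta' A (∼A))) (Term.id (∼A))
/-! ### β-terms, 1-terms, factorized and developed arrow terms -/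

/-- `f` is a primitive arrow term other than an identity. -/
def IsPrim {P : Type} : ∀ {A B : Form P}, Term P A B → Prop
  | _, _, .id _ => False
  | _, _, .comp _ _ => False
  | _, _, .conj _ _ => False
  | _, _, .disj _ _ => False
  | _, _, _ => True

/-- `f` is a 1-term: built from an identity `1_B` by the operations
`1_A ξ −` and `− ξ 1_A` for `ξ ∈ {∧,∨}`. -/
inductive IsOne {P : Type} : ∀ {A B : Form P}, Term P A B → Prop
  | id (A : Form P) : IsOne (Term.id A)
  | conjL (A : Form P) {B C : Form P} {f : Term P B C} : IsOne f → IsOne (Term.id A ⊼ f)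
  | conjR (A : Form P) {B C : Form P} {f : Term P B C} : IsOne f → IsOne (f ⊼ Term.id A)
  | disjL (A : Form P) {B C : Form P} {f : Term P B C} : IsOne f → IsOne (Term.id A ⊽ f)
  | disjR (A : Form P) {B C : Form P} {f : Term P B C} : IsOne f → IsOne (f ⊽ Term.id A)

/-- `f` is a β-term for some primitive arrow term β other than an identity:
built from β by the operations `1_A ξ −` and `− ξ 1_A` for `ξ ∈ {∧,∨}`;
the subterm β is the head of the β-term. Such an `f` is a headed factor. -/
inductive IsBeta {P : Type} : ∀ {A B : Form P}, Term P A B → Prop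
  | prim {A B : Form P} {f : Term P A B} : IsPrim f → IsBeta f
  | conjL (A : Form P) {B C : Form P} {f : Term P B C} : IsBeta f → IsBeta (Term.id A ⊼ f)
  | conjR (A : Form P) {B C : Form P} {f : Term P B C} : IsBeta f → IsBeta (f ⊼ Term.id A)
  | disjL (A : Form P) {B C : Form P} {f : Term P B C} : IsBeta f → IsBeta (Term.id A ⊽ f)
  | disjR (A : Form P) {B C : Form P} {f : Term P B C} : IsBeta f → IsBeta (f ⊽ Term.id A)

/-- A factorized arrow term all of whose factors are headed (are β-terms). -/
inductive AllBeta {P : Type} : ∀ {A B : Form P}, Term P A B → Prop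
  | beta {A B : Form P} {f : Term P A B} : IsBeta f → AllBeta f
  | comp {A B C : Form P} {g : Term P B C} {f : Term P A B} :
      AllBeta g → AllBeta f → AllBeta (g ⬝ f)

/-- A developed arrow term: a factorized arrow term `f_n ∘ … ∘ f_1` (with
parentheses associated arbitrarily) such that `f_1` is a 1-term and, if `n > 1`,
every factor of `f_n ∘ … ∘ f_2` is headed. -/
inductive IsDeveloped {P : Type} : ∀ {A B : Form P}, Term P A B → Prop
  | one {A B : Form P} {f : Term P A B} : IsOne f → IsDeveloped f
  | comp {A B C : Form P} {g : Term P B C} {f : Term P A B} :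
      AllBeta g → IsDeveloped f → IsDeveloped (g ⬝ f)

section DevAux
variable {P : Type}

lemma one_id : ∀ {A B : Form P} {f : Term P A B}, IsOne f →
    ∃ e : A = B, Eqv f (e ▸ Term.id A) := by
  intro A B f h
  induction h with
  | id A => exact ⟨rfl, Eqv.refl _⟩
  | conjL A h ih =>
      obtain ⟨e, he⟩ := ih; subst e
      exact ⟨rfl, Eqv.trans (Eqv.congConj (Eqv.refl _) he) (Eqv.conjOne _ _)⟩
  | conjR A h ih =>
      obtain ⟨e, he⟩ := ih; subst e
      exact ⟨rfl, Eqv.trans (Eqv.congConj he (Eqv.refl _)) (Eqv.conjOne _ _)⟩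
  | disjL A h ih =>
      obtain ⟨e, he⟩ := ih; subst e
      exact ⟨rfl, Eqv.trans (Eqv.congDisj (Eqv.refl _) he) (Eqv.disjOne _ _)⟩
  | disjR A h ih =>
      obtain ⟨e, he⟩ := ih; subst e
      exact ⟨rfl, Eqv.trans (Eqv.congDisj he (Eqv.refl _)) (Eqv.disjOne _ _)⟩

lemma allBeta_conjR {A B : Form P} {f : Term P A B} (h : AllBeta f) (E : Form P) :
    ∃ h' : Term P (A ⋏ E) (B ⋏ E), AllBeta h' ∧ Eqv (f ⊼ Term.id E) h' := by
  induction h with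
  | beta hb => exact ⟨_, AllBeta.beta (IsBeta.conjR E hb), Eqv.refl _⟩
  | comp hg hf ihg ihf =>
      obtain ⟨g', hg', heg⟩ := ihg
      obtain ⟨f', hf', hef⟩ := ihf
      refine ⟨g' ⬝ f', AllBeta.comp hg' hf', ?_⟩
      exact Eqv.trans (Eqv.congConj (Eqv.refl _) (Eqv.symm (Eqv.catIdL _)))
        (Eqv.trans (Eqv.conjTwo _ _ _ _) (Eqv.congComp heg hef))

lemma allBeta_conjL {A B : Form P} {f : Term P A B} (h : AllBeta f) (E : Form P) :
    ∃ h' : Term P (E ⋏ A) (E ⋏ B), AllBeta h' ∧ Eqv (Term.id E ⊼ f) h' := by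
  induction h with
  | beta hb => exact ⟨_, AllBeta.beta (IsBeta.conjL E hb), Eqv.refl _⟩
  | comp hg hf ihg ihf =>
      obtain ⟨g', hg', heg⟩ := ihg
      obtain ⟨f', hf', hef⟩ := ihf
      refine ⟨g' ⬝ f', AllBeta.comp hg' hf', ?_⟩
      exact Eqv.trans (Eqv.congConj (Eqv.symm (Eqv.catIdL _)) (Eqv.refl _))
        (Eqv.trans (Eqv.conjTwo _ _ _ _) (Eqv.congComp heg hef))

lemma allBeta_disjR {A B : Form P} {f : Term P A B} (h : AllBeta f) (E : Form P) :
    ∃ h' : Term P (A ⋎ E) (B ⋎ E), AllBeta h' ∧ Eqv (f ⊽ Term.id E) h' := by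
  induction h with
  | beta hb => exact ⟨_, AllBeta.beta (IsBeta.disjR E hb), Eqv.refl _⟩
  | comp hg hf ihg ihf =>
      obtain ⟨g', hg', heg⟩ := ihg
      obtain ⟨f', hf', hef⟩ := ihf
      refine ⟨g' ⬝ f', AllBeta.comp hg' hf', ?_⟩
      exact Eqv.trans (Eqv.congDisj (Eqv.refl _) (Eqv.symm (Eqv.catIdL _)))
        (Eqv.trans (Eqv.disjTwo _ _ _ _) (Eqv.congComp heg hef))

lemma allBeta_disjL {A B : Form P} {f : Term P A B} (h : AllBeta f) (E : Form P) :
    ∃ h' : Term P (E ⋎ A) (E ⋎ B), AllBeta h' ∧ Eqv (Term.id E ⊽ f) h' := by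
  induction h with
  | beta hb => exact ⟨_, AllBeta.beta (IsBeta.disjL E hb), Eqv.refl _⟩
  | comp hg hf ihg ihf =>
      obtain ⟨g', hg', heg⟩ := ihg
      obtain ⟨f', hf', hef⟩ := ihf
      refine ⟨g' ⬝ f', AllBeta.comp hg' hf', ?_⟩
      exact Eqv.trans (Eqv.congDisj (Eqv.symm (Eqv.catIdL _)) (Eqv.refl _))
        (Eqv.trans (Eqv.disjTwo _ _ _ _) (Eqv.congComp heg hef))

lemma dev_conjR {A B : Form P} {f : Term P A B} (h : IsDeveloped f) (E : Form P) :
    ∃ h' : Term P (A ⋏ E) (B ⋏ E), IsDeveloped h' ∧ Eqv (f ⊼ Term.id E) h' := by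
  induction h with
  | one ho => exact ⟨_, IsDeveloped.one (IsOne.conjR E ho), Eqv.refl _⟩
  | comp hg hf ihf =>
      obtain ⟨g', hg', heg⟩ := allBeta_conjR hg E
      obtain ⟨f', hf', hef⟩ := ihf
      refine ⟨g' ⬝ f', IsDeveloped.comp hg' hf', ?_⟩
      exact Eqv.trans (Eqv.congConj (Eqv.refl _) (Eqv.symm (Eqv.catIdL _)))
        (Eqv.trans (Eqv.conjTwo _ _ _ _) (Eqv.congComp heg hef))

lemma dev_conjL {A B : Form P} {f : Term P A B} (h : IsDeveloped f) (E : Form P) :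
    ∃ h' : Term P (E ⋏ A) (E ⋏ B), IsDeveloped h' ∧ Eqv (Term.id E ⊼ f) h' := by
  induction h with
  | one ho => exact ⟨_, IsDeveloped.one (IsOne.conjL E ho), Eqv.refl _⟩
  | comp hg hf ihf =>
      obtain ⟨g', hg', heg⟩ := allBeta_conjL hg E
      obtain ⟨f', hf', hef⟩ := ihf
      refine ⟨g' ⬝ f', IsDeveloped.comp hg' hf', ?_⟩
      exact Eqv.trans (Eqv.congConj (Eqv.symm (Eqv.catIdL _)) (Eqv.refl _))
        (Eqv.trans (Eqv.conjTwo _ _ _ _) (Eqv.congComp heg hef))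

lemma dev_disjR {A B : Form P} {f : Term P A B} (h : IsDeveloped f) (E : Form P) :
    ∃ h' : Term P (A ⋎ E) (B ⋎ E), IsDeveloped h' ∧ Eqv (f ⊽ Term.id E) h' := by
  induction h with
  | one ho => exact ⟨_, IsDeveloped.one (IsOne.disjR E ho), Eqv.refl _⟩
  | comp hg hf ihf =>
      obtain ⟨g', hg', heg⟩ := allBeta_disjR hg E
      obtain ⟨f', hf', hef⟩ := ihf
      refine ⟨g' ⬝ f', IsDeveloped.comp hg' hf', ?_⟩
      exact Eqv.trans (Eqv.congDisj (Eqv.refl _) (Eqv.symm (Eqv.catIdL _)))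
        (Eqv.trans (Eqv.disjTwo _ _ _ _) (Eqv.congComp heg hef))

lemma dev_disjL {A B : Form P} {f : Term P A B} (h : IsDeveloped f) (E : Form P) :
    ∃ h' : Term P (E ⋎ A) (E ⋎ B), IsDeveloped h' ∧ Eqv (Term.id E ⊽ f) h' := by
  induction h with
  | one ho => exact ⟨_, IsDeveloped.one (IsOne.disjL E ho), Eqv.refl _⟩
  | comp hg hf ihf =>
      obtain ⟨g', hg', heg⟩ := allBeta_disjL hg E
      obtain ⟨f', hf', hef⟩ := ihf
      refine ⟨g' ⬝ f', IsDeveloped.comp hg' hf', ?_⟩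
      exact Eqv.trans (Eqv.congDisj (Eqv.symm (Eqv.catIdL _)) (Eqv.refl _))
        (Eqv.trans (Eqv.disjTwo _ _ _ _) (Eqv.congComp heg hef))

lemma dev_comp {A B C : Form P} {g : Term P B C} {f : Term P A B}
    (hg : IsDeveloped g) (hf : IsDeveloped f) :
    ∃ h : Term P A C, IsDeveloped h ∧ Eqv (g ⬝ f) h := by
  induction hg with
  | one ho =>
      obtain ⟨e, he⟩ := one_id ho; subst e
      exact ⟨f, hf, Eqv.trans (Eqv.congComp he (Eqv.refl _)) (Eqv.catIdL _)⟩
  | comp hg2 hg1 ih =>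
      obtain ⟨h1, hh1, he1⟩ := ih
      exact ⟨_ ⬝ h1, IsDeveloped.comp hg2 hh1,
        Eqv.trans (Eqv.symm (Eqv.catAssoc _ _ _)) (Eqv.congComp (Eqv.refl _) he1)⟩

end DevAux

/-- **Development Lemma**: for every arrow term `f` of PN¬ there is a developed
arrow term `f′` of the same type such that `f = f′` holds in PN¬. -/
theorem development_lemma {P : Type} {A B : Form P} (f : Term P A B) :
    ∃ f' : Term P A B, IsDeveloped f' ∧ Eqv f f' := by
  induction f with
  | id A => exact ⟨Term.id A, IsDeveloped.one (IsOne.id A), Eqv.refl _⟩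
  | comp g f ihg ihf =>
      obtain ⟨g', hg', heg⟩ := ihg
      obtain ⟨f', hf', hef⟩ := ihf
      obtain ⟨h, hh, heh⟩ := dev_comp hg' hf'
      exact ⟨h, hh, Eqv.trans (Eqv.congComp heg hef) heh⟩
  | conj f g ihf ihg =>
      obtain ⟨f', hf', hef⟩ := ihf
      obtain ⟨g', hg', heg⟩ := ihg
      obtain ⟨u, hu, heu⟩ := dev_conjR hf' _
      obtain ⟨v, hv, hev⟩ := dev_conjL hg' _
      obtain ⟨h, hh, heh⟩ := dev_comp hu hv
      refine ⟨h, hh, Eqv.trans (Eqv.congConj hef heg) (Eqv.trans ?_ heh)⟩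
      exact Eqv.trans (Eqv.congConj (Eqv.symm (Eqv.catIdR _)) (Eqv.symm (Eqv.catIdL _)))
        (Eqv.trans (Eqv.conjTwo _ _ _ _) (Eqv.congComp heu hev))
  | disj f g ihf ihg =>
      obtain ⟨f', hf', hef⟩ := ihf
      obtain ⟨g', hg', heg⟩ := ihg
      obtain ⟨u, hu, heu⟩ := dev_disjR hf' _
      obtain ⟨v, hv, hev⟩ := dev_disjL hg' _
      obtain ⟨h, hh, heh⟩ := dev_comp hu hv
      refine ⟨h, hh, Eqv.trans (Eqv.congDisj hef heg) (Eqv.trans ?_ heh)⟩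
      exact Eqv.trans (Eqv.congDisj (Eqv.symm (Eqv.catIdR _)) (Eqv.symm (Eqv.catIdL _)))
        (Eqv.trans (Eqv.disjTwo _ _ _ _) (Eqv.congComp heu hev))
  | _ =>
      refine ⟨_, ?_, Eqv.symm (Eqv.catIdR _)⟩
      exact IsDeveloped.comp (AllBeta.beta (IsBeta.prim trivial))
        (IsDeveloped.one (IsOne.id _))
end
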